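/- arXiv:1909.06606 — 2 statements merged into one kernel-verified Lean document; each statement's English description precedes it below -/
import Mathlib

section
/- Let n ≥ 3, r⋆ = (n−1)^(−1/(n−2)), Q⋆ = (n−1)^((n−1)/(n−2)), Q(r) = (n−2)/(r(1 − r^(n−2))), and for q > Q⋆ let r₁(q) ∈ (0, r⋆) and r₂(q) ∈ (r⋆, 1) be the unique solutions of Q(r) = q in the respective intervals. Then the open unit ball of EuclideanSpace ℝ (Fin n) is the disjoint union of the singleton {0}, the sphere {x : ‖x‖ = r⋆}, the spheres {x : ‖x‖ = r₁(q)} for q > Q⋆, and the spheres {x : ‖x‖ = r₂(q)} for q > Q⋆; that is, these sets are pairwise disjoint and their union equals {x : ‖x‖ < 1}. -/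
/-!
With `m = n - 2` we have `Q r = m / g r` for `g r = r - r ^ (m + 1)`. On `[0, ∞)` the function `g`
increases up to its critical point `r⋆`, where `(m + 1) r⋆ ^ m = 1`, and decreases afterwards, so
`Q⋆ = (m + 1) / r⋆ = Q r⋆` is a strict minimum of `Q` on `(0, 1)`. Every radius `ρ ∈ (0, 1)` other
than `r⋆` therefore has `Q ρ > Q⋆` and, by uniqueness, equals `r₁ (Q ρ)` or `r₂ (Q ρ)`. The pieces
are disjoint because their radii differ: `0 < r₁ q < r⋆ < r₂ q'`, and `rᵢ` is injective since
`Q ∘ rᵢ = id`.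
-/

open Set Real

theorem mul_one_sub_pow_lt_of_ne {m : ℕ} (hm : m ≠ 0) {c r : ℝ} (hc : 0 < c)
    (hcm : (m + 1) * c ^ m = 1) (hr : 0 ≤ r) (hrc : r ≠ c) :
    r * (1 - r ^ m) < c * (1 - c ^ m) := by
  set g : ℝ → ℝ := fun x ↦ x - x ^ (m + 1)
  have hg : ∀ x, x * (1 - x ^ m) = g x := fun x ↦ by simp only [g]; ring
  have hg' : ∀ x, HasDerivAt g (1 - (m + 1) * x ^ m) x := fun x ↦ by
    simpa using (hasDerivAt_id' x).fun_sub (hasDerivAt_pow (m + 1) x)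
  have hg_cont : Continuous g := by fun_prop
  rw [hg, hg]
  rcases hrc.lt_or_gt with hlt | hgt
  · refine strictMonoOn_of_deriv_pos (convex_Icc 0 c) hg_cont.continuousOn (fun x hx ↦ ?_)
      ⟨hr, hlt.le⟩ ⟨hc.le, le_rfl⟩ hlt
    rw [interior_Icc] at hx
    have : x ^ m < c ^ m := pow_lt_pow_left₀ hx.2 hx.1.le hm
    rw [(hg' x).deriv]; nlinarith
  · refine strictAntiOn_of_deriv_neg (convex_Ici c) hg_cont.continuousOn (fun x hx ↦ ?_)
      self_mem_Ici hgt.le hgt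
    rw [interior_Ici] at hx
    have : c ^ m < x ^ m := pow_lt_pow_left₀ hx hc.le hm
    rw [(hg' x).deriv]; nlinarith

theorem pow_lt_one_of_add_one_mul_pow_eq_one {m : ℕ} (hm : m ≠ 0) {c : ℝ}
    (hcm : (m + 1) * c ^ m = 1) : c ^ m < 1 := by
  have : (1 : ℝ) ≤ m := mod_cast Nat.one_le_iff_ne_zero.2 hm
  nlinarith

theorem add_one_div_lt_div_mul_one_sub_pow {m : ℕ} (hm : m ≠ 0) {c r : ℝ} (hc : 0 < c)
    (hcm : (m + 1) * c ^ m = 1) (hr : r ∈ Ioo 0 1) (hrc : r ≠ c) :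
    (m + 1) / c < m / (r * (1 - r ^ m)) := by
  have hm' : (0 : ℝ) < m := by positivity
  have hcpos : 0 < c * (1 - c ^ m) :=
    mul_pos hc (sub_pos.2 (pow_lt_one_of_add_one_mul_pow_eq_one hm hcm))
  have hrm : 0 < r * (1 - r ^ m) := mul_pos hr.1 (sub_pos.2 (pow_lt_one₀ hr.1.le hr.2 hm))
  calc (m + 1) / c = m / (c * (1 - c ^ m)) := by
        rw [div_eq_div_iff hc.ne' hcpos.ne']; linear_combination -c * hcm
    _ < m / (r * (1 - r ^ m)) :=
        div_lt_div_of_pos_left hm' hrm (mul_one_sub_pow_lt_of_ne hm hc hcm hr.1.le hrc)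

theorem rpow_neg_one_div_pow {a : ℝ} (ha : 0 < a) {m : ℕ} (hm : m ≠ 0) :
    (a ^ (-1 / (m : ℝ))) ^ m = a⁻¹ := by
  rw [← rpow_natCast, ← rpow_mul ha.le, div_mul_cancel₀ _ (Nat.cast_ne_zero.2 hm), rpow_neg_one]

theorem rpow_add_one_div_self {a x : ℝ} (ha : 0 < a) (hx : x ≠ 0) :
    a ^ ((x + 1) / x) = a / a ^ (-1 / x) := by
  rw [eq_div_iff (rpow_pos_of_pos ha _).ne', ← rpow_add ha, ← add_div, add_neg_cancel_right,
    div_self hx, rpow_one]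

section NormLevelSets

variable {E : Type*} [SeminormedAddGroup E]

theorem disjoint_norm_eq {s t : ℝ} (h : s ≠ t) :
    Disjoint {x : E | ‖x‖ = s} {x | ‖x‖ = t} :=
  disjoint_left.2 fun _ hs ht ↦ h (hs.symm.trans ht)

theorem disjoint_zero_norm_eq {t : ℝ} (ht : t ≠ 0) :
    Disjoint {(0 : E)} {x | ‖x‖ = t} :=
  disjoint_singleton_left.2 fun h ↦ ht (h.symm.trans norm_zero)

end NormLevelSets

theorem union_norm_eq_eq_norm_lt_one {E : Type*} [NormedAddGroup E] {rstar Qstar : ℝ}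
    {Q r₁ r₂ : ℝ → ℝ} (hr1 : rstar < 1) (hmin : ∀ r ∈ Ioo 0 1, r ≠ rstar → Qstar < Q r)
    (hr₁ : ∀ q, Qstar < q → r₁ q < rstar ∧ ∀ r ∈ Ioo 0 rstar, Q r = q → r = r₁ q)
    (hr₂ : ∀ q, Qstar < q → r₂ q < 1 ∧ ∀ r ∈ Ioo rstar 1, Q r = q → r = r₂ q) :
    {(0 : E)} ∪ {x | ‖x‖ = rstar} ∪ (⋃ q ∈ Ioi Qstar, {x | ‖x‖ = r₁ q}) ∪
      (⋃ q ∈ Ioi Qstar, {x | ‖x‖ = r₂ q}) = {x | ‖x‖ < 1} := by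
  ext x
  simp only [mem_union, mem_singleton_iff, mem_ofPred_eq, mem_iUnion, mem_Ioi, exists_prop]
  refine ⟨?_, fun hx ↦ ?_⟩
  · rintro (((rfl | hx) | ⟨q, hq, hx⟩) | ⟨q, hq, hx⟩)
    · simp
    · exact hx ▸ hr1
    · exact hx ▸ (hr₁ q hq).1.trans hr1
    · exact hx ▸ (hr₂ q hq).1
  rcases eq_or_ne x 0 with rfl | hx0
  · simp
  have hpos : 0 < ‖x‖ := norm_pos_iff.2 hx0
  rcases lt_trichotomy ‖x‖ rstar with hlt | heq | hgt
  · have hq := hmin _ ⟨hpos, hx⟩ hlt.ne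
    exact Or.inl (Or.inr ⟨Q ‖x‖, hq, (hr₁ _ hq).2 _ ⟨hpos, hlt⟩ rfl⟩)
  · exact Or.inl (Or.inl (Or.inr heq))
  · have hq := hmin _ ⟨hpos, hx⟩ hgt.ne'
    exact Or.inr ⟨Q ‖x‖, hq, (hr₂ _ hq).2 _ ⟨hgt, hx⟩ rfl⟩

/-- foliation structure of the radial solutions of Bernoulli's problem in
the unit ball of `ℝⁿ` (`n ≥ 3`): the origin, the critical sphere `{‖x‖ = r⋆}`, and the
spheres `{‖x‖ = r₁(q)}`, `{‖x‖ = r₂(q)}` for `q > Q⋆` are pairwise disjoint and their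
union is the open unit ball. -/
theorem statement12 (n : ℕ) (hn : 3 ≤ n) (rstar Qstar : ℝ)
    (hrstar : rstar = ((n : ℝ) - 1) ^ (-(1 : ℝ) / ((n : ℝ) - 2)))
    (hQstar : Qstar = ((n : ℝ) - 1) ^ (((n : ℝ) - 1) / ((n : ℝ) - 2)))
    (Q : ℝ → ℝ)
    (hQ : ∀ r ∈ Set.Ioo (0 : ℝ) 1, Q r = ((n : ℝ) - 2) / (r * (1 - r ^ (n - 2))))
    (r₁ r₂ : ℝ → ℝ)
    (hr₁ : ∀ q : ℝ, Qstar < q →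
      r₁ q ∈ Set.Ioo 0 rstar ∧ Q (r₁ q) = q ∧
      ∀ r ∈ Set.Ioo 0 rstar, Q r = q → r = r₁ q)
    (hr₂ : ∀ q : ℝ, Qstar < q →
      r₂ q ∈ Set.Ioo rstar 1 ∧ Q (r₂ q) = q ∧
      ∀ r ∈ Set.Ioo rstar 1, Q r = q → r = r₂ q) :
    -- the union is the open unit ball
    ({(0 : EuclideanSpace ℝ (Fin n))} ∪
      {x : EuclideanSpace ℝ (Fin n) | ‖x‖ = rstar} ∪
      (⋃ q ∈ Set.Ioi Qstar, {x : EuclideanSpace ℝ (Fin n) | ‖x‖ = r₁ q}) ∪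
      (⋃ q ∈ Set.Ioi Qstar, {x : EuclideanSpace ℝ (Fin n) | ‖x‖ = r₂ q}) =
      {x : EuclideanSpace ℝ (Fin n) | ‖x‖ < 1}) ∧
    -- pairwise disjointness of the pieces
    (Disjoint {(0 : EuclideanSpace ℝ (Fin n))}
      {x : EuclideanSpace ℝ (Fin n) | ‖x‖ = rstar}) ∧
    (∀ q ∈ Set.Ioi Qstar, Disjoint {(0 : EuclideanSpace ℝ (Fin n))}
      {x : EuclideanSpace ℝ (Fin n) | ‖x‖ = r₁ q}) ∧
    (∀ q ∈ Set.Ioi Qstar, Disjoint {(0 : EuclideanSpace ℝ (Fin n))}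
      {x : EuclideanSpace ℝ (Fin n) | ‖x‖ = r₂ q}) ∧
    (∀ q ∈ Set.Ioi Qstar, Disjoint {x : EuclideanSpace ℝ (Fin n) | ‖x‖ = rstar}
      {x : EuclideanSpace ℝ (Fin n) | ‖x‖ = r₁ q}) ∧
    (∀ q ∈ Set.Ioi Qstar, Disjoint {x : EuclideanSpace ℝ (Fin n) | ‖x‖ = rstar}
      {x : EuclideanSpace ℝ (Fin n) | ‖x‖ = r₂ q}) ∧
    (∀ q ∈ Set.Ioi Qstar, ∀ q' ∈ Set.Ioi Qstar,
      Disjoint {x : EuclideanSpace ℝ (Fin n) | ‖x‖ = r₁ q}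
        {x : EuclideanSpace ℝ (Fin n) | ‖x‖ = r₂ q'}) ∧
    (∀ q ∈ Set.Ioi Qstar, ∀ q' ∈ Set.Ioi Qstar, q ≠ q' →
      Disjoint {x : EuclideanSpace ℝ (Fin n) | ‖x‖ = r₁ q}
        {x : EuclideanSpace ℝ (Fin n) | ‖x‖ = r₁ q'}) ∧
    (∀ q ∈ Set.Ioi Qstar, ∀ q' ∈ Set.Ioi Qstar, q ≠ q' →
      Disjoint {x : EuclideanSpace ℝ (Fin n) | ‖x‖ = r₂ q}
        {x : EuclideanSpace ℝ (Fin n) | ‖x‖ = r₂ q'}) := by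
  obtain ⟨m, rfl⟩ : ∃ m, n = m + 2 := ⟨n - 2, by omega⟩
  have hm : m ≠ 0 := by omega
  have hcast : ((m + 2 : ℕ) : ℝ) = m + 2 := by push_cast; ring
  simp only [hcast, add_sub_cancel_right, Nat.add_sub_cancel,
    show (m : ℝ) + 2 - 1 = m + 1 by ring] at hrstar hQstar hQ
  have hr0 : 0 < rstar := hrstar ▸ rpow_pos_of_pos (by positivity) _
  have hcm : ((m : ℝ) + 1) * rstar ^ m = 1 := by
    rw [hrstar, rpow_neg_one_div_pow (by positivity) hm, mul_inv_cancel₀ (by positivity)]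
  have hr1 : rstar < 1 :=
    (pow_lt_one_iff_of_nonneg hr0.le hm).1 (pow_lt_one_of_add_one_mul_pow_eq_one hm hcm)
  have hQstar' : Qstar = (m + 1) / rstar := by
    rw [hQstar, hrstar, rpow_add_one_div_self (by positivity) (by positivity)]
  have hmin : ∀ r ∈ Ioo 0 1, r ≠ rstar → Qstar < Q r := fun r hr hrc ↦ by
    rw [hQ r hr, hQstar']
    exact add_one_div_lt_div_mul_one_sub_pow hm hr0 hcm hr hrc
  refine ⟨union_norm_eq_eq_norm_lt_one hr1 hmin (fun q hq ↦ ⟨(hr₁ q hq).1.2, (hr₁ q hq).2.2⟩)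
    (fun q hq ↦ ⟨(hr₂ q hq).1.2, (hr₂ q hq).2.2⟩), disjoint_zero_norm_eq hr0.ne',
    fun q hq ↦ disjoint_zero_norm_eq (hr₁ q hq).1.1.ne',
    fun q hq ↦ disjoint_zero_norm_eq (hr0.trans (hr₂ q hq).1.1).ne',
    fun q hq ↦ disjoint_norm_eq (hr₁ q hq).1.2.ne',
    fun q hq ↦ disjoint_norm_eq (hr₂ q hq).1.1.ne,
    fun q hq q' hq' ↦ disjoint_norm_eq ((hr₁ q hq).1.2.trans (hr₂ q' hq').1.1).ne,
    fun q hq q' hq' hqq' ↦ disjoint_norm_eq fun h ↦ hqq' ?_,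
    fun q hq q' hq' hqq' ↦ disjoint_norm_eq fun h ↦ hqq' ?_⟩
  · rw [← (hr₁ q hq).2.1, h, (hr₁ q' hq').2.1]
  · rw [← (hr₂ q hq).2.1, h, (hr₂ q' hq').2.1]
end

section
/- Let n ≥ 2 and k ≥ 0 be natural numbers and let p : EuclideanSpace ℝ (Fin n) → ℝ be (the evaluation of) a homogeneous polynomial of degree k in the coordinates which is harmonic on all of EuclideanSpace ℝ (Fin n). Then the function x ↦ ‖x‖^(2−n−2k) · p(x) is harmonic on EuclideanSpace ℝ (Fin n) \ {0}. -/
def IsHarmonicOn {n : ℕ} (f : EuclideanSpace ℝ (Fin n) → ℝ)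
    (U : Set (EuclideanSpace ℝ (Fin n))) : Prop :=
  ContDiffOn ℝ 2 f U ∧
  ∀ x ∈ U, ∑ i : Fin n,
    fderiv ℝ (fun y => fderiv ℝ f y (EuclideanSpace.single i 1)) x
      (EuclideanSpace.single i 1) = 0

/-!
Write `s = 2 - n - 2k`. Away from the origin, the product rule for the Laplacian gives
`Δ(‖x‖ˢ p) = ‖x‖ˢ Δp + 2 ∇‖x‖ˢ · ∇p + p Δ‖x‖ˢ`, where `∇‖x‖ˢ = s ‖x‖ˢ⁻² x` and
`Δ‖x‖ˢ = s (n + s - 2) ‖x‖ˢ⁻²`. By Euler's identity `x · ∇p = k p` for the homogeneous `p`, so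
with `Δp = 0` the Laplacian equals `s (2k + n + s - 2) ‖x‖ˢ⁻² p`, which vanishes for this `s`.
-/

namespace MvPolynomial

variable {σ : Type*}

theorem contDiff_eval {𝕜 E : Type*} [NontriviallyNormedField 𝕜] [NormedAddCommGroup E]
    [NormedSpace 𝕜 E] {n : WithTop ℕ∞} (P : MvPolynomial σ 𝕜) {f : σ → E → 𝕜}
    (hf : ∀ i, ContDiff 𝕜 n (f i)) : ContDiff 𝕜 n fun y => eval (fun i => f i y) P := by
  induction P using MvPolynomial.induction_on with
  | C a => simpa using contDiff_const
  | add p q hp hq => simpa using hp.add hq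
  | mul_X p i hp => simpa using hp.mul (hf i)

theorem IsHomogeneous.eval_smul [Fintype σ] {R : Type*} [CommSemiring R] {P : MvPolynomial σ R}
    {k : ℕ} (hP : P.IsHomogeneous k) (c : R) (x : σ → R) :
    eval (c • x) P = c ^ k * eval x P := by
  simp only [eval_eq', Finset.mul_sum, Pi.smul_apply, smul_eq_mul, mul_pow,
    Finset.prod_mul_distrib, Finset.prod_pow_eq_pow_sum]
  refine Finset.sum_congr rfl fun d hd => ?_
  have hdeg : ∑ i, d i = k := by
    simpa [Finsupp.weight_apply, Finsupp.sum_fintype] using hP (mem_support_iff.mp hd)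
  rw [hdeg]
  ring

end MvPolynomial

section RealValued

variable {E : Type*} [NormedAddCommGroup E] [NormedSpace ℝ E]

theorem fderiv_apply_self_of_homogeneous {f : E → ℝ} {x : E} {k : ℕ}
    (hf : DifferentiableAt ℝ f x) (hhom : ∀ t : ℝ, 0 < t → f (t • x) = t ^ k * f x) :
    fderiv ℝ f x x = k * f x := by
  have hray : HasDerivAt (fun t : ℝ => f (t • x)) (fderiv ℝ f x x) 1 := by
    have := hf.hasFDerivAt.comp_hasDerivAt_of_eq (1 : ℝ) ((hasDerivAt_id 1).smul_const x)
      (one_smul ℝ x).symm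
    simpa [Function.comp_def] using this
  have hpow : HasDerivAt (fun t : ℝ => f (t • x)) (k * f x) 1 := by
    have hk := (hasDerivAt_pow k (1 : ℝ)).mul_const (f x)
    simp only [one_pow, mul_one] at hk
    refine hk.congr_of_eventuallyEq ?_
    filter_upwards [lt_mem_nhds one_pos] with t ht using hhom t ht
  exact hray.unique hpow

theorem ContDiffAt.differentiableAt_fderiv_apply {f : E → ℝ} {x : E} (hf : ContDiffAt ℝ 2 f x)
    (v : E) : DifferentiableAt ℝ (fun y => fderiv ℝ f y v) x :=
  ((hf.fderiv_right (m := 1) (by norm_num)).differentiableAt one_ne_zero).clm_apply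
    (differentiableAt_const v)

theorem fderiv_fderiv_mul_apply {f g : E → ℝ} {x : E} (hf : ContDiffAt ℝ 2 f x)
    (hg : ContDiffAt ℝ 2 g x) (v : E) :
    fderiv ℝ (fun y => fderiv ℝ (fun z => f z * g z) y v) x v =
      f x * fderiv ℝ (fun y => fderiv ℝ g y v) x v + 2 * (fderiv ℝ f x v * fderiv ℝ g x v) +
        g x * fderiv ℝ (fun y => fderiv ℝ f y v) x v := by
  have hleibniz : (fun y => fderiv ℝ (fun z => f z * g z) y v) =ᶠ[nhds x]
      fun y => f y * fderiv ℝ g y v + g y * fderiv ℝ f y v := by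
    filter_upwards [hf.eventually (by simp), hg.eventually (by simp)] with y hfy hgy
    rw [fderiv_fun_mul (hfy.differentiableAt two_ne_zero) (hgy.differentiableAt two_ne_zero)]
    simp
  have hderiv : HasFDerivAt (fun y => f y * fderiv ℝ g y v + g y * fderiv ℝ f y v) _ x :=
    ((hf.differentiableAt two_ne_zero).hasFDerivAt.mul
      (hg.differentiableAt_fderiv_apply v).hasFDerivAt).add
    ((hg.differentiableAt two_ne_zero).hasFDerivAt.mul
      (hf.differentiableAt_fderiv_apply v).hasFDerivAt)
  rw [hleibniz.fderiv_eq, hderiv.fderiv]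
  simp only [add_apply, smul_apply, smul_eq_mul]
  ring

end RealValued

section NormRpow

variable {F : Type*} [NormedAddCommGroup F] [InnerProductSpace ℝ F]
open RealInnerProductSpace

theorem contDiffAt_norm_rpow_of_ne_zero {x : F} (hx : x ≠ 0) (s : ℝ) {m : WithTop ℕ∞} :
    ContDiffAt ℝ m (fun y : F => ‖y‖ ^ s) x :=
  (contDiffAt_norm ℝ hx).rpow_const_of_ne (norm_ne_zero_iff.mpr hx)

theorem hasFDerivAt_norm_rpow_of_ne_zero {x : F} (hx : x ≠ 0) (s : ℝ) :
    HasFDerivAt (fun y : F => ‖y‖ ^ s) ((s * ‖x‖ ^ (s - 2)) • innerSL ℝ x) x := by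
  have hsq : ∀ y : F, ‖y‖ ^ s = (‖y‖ ^ 2) ^ (s / 2) := fun y => by
    rw [← Real.rpow_natCast_mul (norm_nonneg y)]
    push_cast
    ring_nf
  simp only [hsq]
  convert ((hasStrictFDerivAt_norm_sq x).rpow_const (p := s / 2) (by simp [hx])).hasFDerivAt
    using 1
  rw [← Real.rpow_natCast_mul (norm_nonneg x), ← Nat.cast_smul_eq_nsmul ℝ, smul_smul]
  congr 1
  push_cast
  ring_nf

theorem fderiv_norm_rpow_apply {x : F} (hx : x ≠ 0) (s : ℝ) (v : F) :
    fderiv ℝ (fun y : F => ‖y‖ ^ s) x v = s * ‖x‖ ^ (s - 2) * ⟪x, v⟫ := by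
  simp [(hasFDerivAt_norm_rpow_of_ne_zero hx s).fderiv, mul_assoc]

theorem fderiv_fderiv_norm_rpow_apply {x : F} (hx : x ≠ 0) (s : ℝ) (v : F) :
    fderiv ℝ (fun y => fderiv ℝ (fun y : F => ‖y‖ ^ s) y v) x v =
      s * ‖x‖ ^ (s - 2) * ‖v‖ ^ 2 + s * (s - 2) * ‖x‖ ^ (s - 4) * ⟪x, v⟫ ^ 2 := by
  have hfirst : (fun y => fderiv ℝ (fun y : F => ‖y‖ ^ s) y v) =ᶠ[nhds x]
      fun y => s * ‖y‖ ^ (s - 2) * ⟪v, y⟫ := by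
    filter_upwards [isOpen_ne.mem_nhds hx] with y hy
    rw [fderiv_norm_rpow_apply hy, real_inner_comm]
  have hderiv : HasFDerivAt (fun y => s * ‖y‖ ^ (s - 2) * ⟪v, y⟫) _ x :=
    ((hasFDerivAt_norm_rpow_of_ne_zero hx (s - 2)).const_mul s).mul (innerSL ℝ v).hasFDerivAt
  rw [hfirst.fderiv_eq, hderiv.fderiv]
  simp only [add_apply, smul_apply, smul_eq_mul, innerSL_apply_apply, real_inner_self_eq_norm_sq, real_inner_comm x v]
  ring_nf

end NormRpow

section EuclideanLaplacian

variable {ι : Type*} [Fintype ι] [DecidableEq ι]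

open EuclideanSpace

noncomputable def euclideanLaplacian (f : EuclideanSpace ℝ ι → ℝ) (x : EuclideanSpace ℝ ι) : ℝ :=
  ∑ i, fderiv ℝ (fun y => fderiv ℝ f y (single i 1)) x (single i 1)

theorem sum_mul_apply_single (x : EuclideanSpace ℝ ι) (L : EuclideanSpace ℝ ι →L[ℝ] ℝ) :
    ∑ i, x i * L (single i 1) = L x := by
  conv_rhs => rw [← (basisFun ι ℝ).sum_repr x]
  simp [map_sum]

theorem euclideanLaplacian_mul {f g : EuclideanSpace ℝ ι → ℝ} {x : EuclideanSpace ℝ ι}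
    (hf : ContDiffAt ℝ 2 f x) (hg : ContDiffAt ℝ 2 g x) :
    euclideanLaplacian (fun y => f y * g y) x =
      f x * euclideanLaplacian g x +
        2 * ∑ i, fderiv ℝ f x (single i 1) * fderiv ℝ g x (single i 1) +
        g x * euclideanLaplacian f x := by
  simp only [euclideanLaplacian, fderiv_fderiv_mul_apply hf hg, Finset.sum_add_distrib,
    Finset.mul_sum]

theorem euclideanLaplacian_norm_rpow {x : EuclideanSpace ℝ ι} (hx : x ≠ 0) (s : ℝ) :
    euclideanLaplacian (fun y => ‖y‖ ^ s) x = s * (Fintype.card ι + s - 2) * ‖x‖ ^ (s - 2) := by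
  have hnorm : 0 < ‖x‖ := norm_pos_iff.mpr hx
  have hsq : ∑ i, x i ^ 2 = ‖x‖ ^ 2 := by
    simp [EuclideanSpace.norm_sq_eq]
  have hpow : ‖x‖ ^ (s - 4) * ‖x‖ ^ 2 = ‖x‖ ^ (s - 2) := by
    rw [← Real.rpow_natCast, ← Real.rpow_add hnorm]
    norm_num
    ring_nf
  simp only [euclideanLaplacian, fderiv_fderiv_norm_rpow_apply hx, PiLp.norm_single, norm_one,
    inner_single_right, one_mul, conj_trivial, one_pow, Finset.sum_add_distrib, ← Finset.mul_sum,
    Finset.sum_const, Finset.card_univ, nsmul_eq_mul, mul_one, hsq]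
  linear_combination s * (s - 2) * hpow

theorem euclideanLaplacian_norm_rpow_mul {p : EuclideanSpace ℝ ι → ℝ} {x : EuclideanSpace ℝ ι}
    (hx : x ≠ 0) (s : ℝ) (hp : ContDiffAt ℝ 2 p x) :
    euclideanLaplacian (fun y => ‖y‖ ^ s * p y) x =
      ‖x‖ ^ s * euclideanLaplacian p x + 2 * s * ‖x‖ ^ (s - 2) * fderiv ℝ p x x +
        s * (Fintype.card ι + s - 2) * ‖x‖ ^ (s - 2) * p x := by
  have hgrad : ∑ i, fderiv ℝ (fun y => ‖y‖ ^ s) x (single i 1) * fderiv ℝ p x (single i 1) =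
      s * ‖x‖ ^ (s - 2) * fderiv ℝ p x x := by
    rw [← sum_mul_apply_single x (fderiv ℝ p x), Finset.mul_sum]
    refine Finset.sum_congr rfl fun i _ => ?_
    rw [fderiv_norm_rpow_apply hx, inner_single_right, one_mul, conj_trivial]
    ring
  rw [euclideanLaplacian_mul (contDiffAt_norm_rpow_of_ne_zero hx s) hp,
    euclideanLaplacian_norm_rpow hx, hgrad]
  ring

end EuclideanLaplacian

theorem statement15_general (n k : ℕ)
    (p : EuclideanSpace ℝ (Fin n) → ℝ)
    (hpoly : ∃ P : MvPolynomial (Fin n) ℝ, P.IsHomogeneous k ∧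
      ∀ x : EuclideanSpace ℝ (Fin n), p x = MvPolynomial.eval (fun i => x i) P)
    (hharm : IsHarmonicOn p Set.univ) :
    IsHarmonicOn (fun x => ‖x‖ ^ ((2 : ℝ) - n - 2 * k) * p x)
      {x : EuclideanSpace ℝ (Fin n) | x ≠ 0} := by
  obtain ⟨P, hP, hp⟩ := hpoly
  have hpC : ContDiff ℝ 2 p := by
    rw [funext hp]
    exact MvPolynomial.contDiff_eval P fun i => (EuclideanSpace.proj (𝕜 := ℝ) i).contDiff
  refine ⟨fun x hx => ((contDiffAt_norm_rpow_of_ne_zero hx _).mul hpC.contDiffAt).contDiffWithinAt,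
    fun x hx => ?_⟩
  have hEuler : fderiv ℝ p x x = k * p x :=
    fderiv_apply_self_of_homogeneous (hpC.differentiable two_ne_zero x) fun t _ => by
      rw [hp, hp, ← hP.eval_smul]
      rfl
  have hLaplacian : euclideanLaplacian p x = 0 := hharm.2 x trivial
  change euclideanLaplacian _ x = 0
  rw [euclideanLaplacian_norm_rpow_mul hx _ hpC.contDiffAt, hLaplacian, hEuler, Fintype.card_fin]
  ring

/-- the Kelvin transform `x ↦ ‖x‖^(2−n−2k) p(x)` of a homogeneous harmonic
polynomial `p` of degree `k` on `ℝⁿ` (`n ≥ 2`) is harmonic away from the origin. -/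
theorem statement15 (n k : ℕ) (hn : 2 ≤ n)
    (p : EuclideanSpace ℝ (Fin n) → ℝ)
    (hpoly : ∃ P : MvPolynomial (Fin n) ℝ, P.IsHomogeneous k ∧
      ∀ x : EuclideanSpace ℝ (Fin n), p x = MvPolynomial.eval (fun i => x i) P)
    (hharm : IsHarmonicOn p Set.univ) :
    IsHarmonicOn (fun x => ‖x‖ ^ ((2 : ℝ) - n - 2 * k) * p x)
      {x : EuclideanSpace ℝ (Fin n) | x ≠ 0} :=
  statement15_general n k p hpoly hharm
end
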